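/- arXiv:1610.04071 — 10 statements merged into one kernel-verified Lean document; each statement's English description precedes it below -/
import Mathlib

section
/- Let α ∈ [0,1], let f be α-strongly regular on [0,∞), and let c ≥ 0 be a constant. Then f − c is α-strongly regular on the region where it is nonnegative: for all 0 ≤ x₁ < x₂ with f(x₂) ≥ c (hence also f(x₁) ≥ c, since f is nonincreasing), one has (f(x₂) − c)/|f'(x₂)| − (f(x₁) − c)/|f'(x₁)| ≤ α·(x₂ − x₁). -/
/-- If `f` is `α`-strongly regular on `[0,∞)` and `c ≥ 0`, then `f - c`
is `α`-strongly regular on the region where it is nonnegative. -/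
theorem alpha_sr_sub_const
    (α : ℝ) (hα0 : 0 ≤ α) (hα1 : α ≤ 1)
    (f : ℝ → ℝ)
    (hf_nonneg : ∀ x, 0 ≤ x → 0 ≤ f x)
    (hf_anti : ∀ x y, 0 ≤ x → x ≤ y → f y ≤ f x)
    (hf_diff : ∀ x, 0 ≤ x → DifferentiableAt ℝ f x)
    (hf_deriv_neg : ∀ x, 0 ≤ x → deriv f x < 0)
    (hf_sr : ∀ x₁ x₂, 0 ≤ x₁ → x₁ < x₂ →
      f x₂ / |deriv f x₂| - f x₁ / |deriv f x₁| ≤ α * (x₂ - x₁))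
    (c : ℝ) (hc : 0 ≤ c) :
    ∀ x₁ x₂, 0 ≤ x₁ → x₁ < x₂ → c ≤ f x₂ →
      (f x₂ - c) / |deriv f x₂| - (f x₁ - c) / |deriv f x₁| ≤ α * (x₂ - x₁) := by
  intro x₁ x₂ hx₁ hx₁₂ hc₂
  have hx₂ : (0:ℝ) ≤ x₂ := hx₁.trans hx₁₂.le
  have hu : 0 < |deriv f x₁| := abs_pos.mpr (hf_deriv_neg x₁ hx₁).ne
  have hv : 0 < |deriv f x₂| := abs_pos.mpr (hf_deriv_neg x₂ hx₂).ne
  have hba : f x₂ ≤ f x₁ := hf_anti x₁ x₂ hx₁ hx₁₂.le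
  rcases le_or_gt (|deriv f x₂|) (|deriv f x₁|) with h | h
  · have hsr := hf_sr x₁ x₂ hx₁ hx₁₂
    have hkey : c / |deriv f x₁| ≤ c / |deriv f x₂| :=
      div_le_div_of_nonneg_left hc hv h
    rw [sub_div, sub_div]
    linarith
  · have h1 : (f x₂ - c) / |deriv f x₂| ≤ (f x₂ - c) / |deriv f x₁| :=
      div_le_div_of_nonneg_left (by linarith) hu h.le
    have h2 : (f x₂ - c) / |deriv f x₁| ≤ (f x₁ - c) / |deriv f x₁| :=
      by gcongr <;> linarith
    have h3 : 0 ≤ α * (x₂ - x₁) := mul_nonneg hα0 (by linarith)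
    linarith
end

section
/- Let α ∈ [0,1) and let f be α-strongly regular on [0,∞). Then for all 0 ≤ x₁ ≤ x₂, the integral of f over [x₁, x₂] satisfies ∫_{x₁}^{x₂} f(x) dx ≤ (1/(1−α)) · (f(x₁)/|f'(x₁)|) · (f(x₁) − f(x₂)). -/
/-- For `α ∈ [0,1)` and `f` α-strongly regular on `[0,∞)`,
the integral of `f` over `[x₁, x₂]` is at most
`(1/(1−α)) · (f x₁ / |f' x₁|) · (f x₁ − f x₂)`. -/
theorem alpha_sr_integral_bound
    (α : ℝ) (hα0 : 0 ≤ α) (hα1 : α < 1)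
    (f : ℝ → ℝ)
    (hf_nonneg : ∀ x, 0 ≤ x → 0 ≤ f x)
    (hf_anti : ∀ x y, 0 ≤ x → x ≤ y → f y ≤ f x)
    (hf_diff : ∀ x, 0 ≤ x → DifferentiableAt ℝ f x)
    (hf_deriv_neg : ∀ x, 0 ≤ x → deriv f x < 0)
    (hf_sr : ∀ x₁ x₂, 0 ≤ x₁ → x₁ < x₂ →
      f x₂ / |deriv f x₂| - f x₁ / |deriv f x₁| ≤ α * (x₂ - x₁)) :
    ∀ x₁ x₂, 0 ≤ x₁ → x₁ ≤ x₂ →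
      ∫ x in x₁..x₂, f x ≤
        (1 / (1 - α)) * (f x₁ / |deriv f x₁|) * (f x₁ - f x₂) := by
  intro x₁ x₂ hx₁ hx₁₂
  rcases eq_or_lt_of_le hx₁₂ with rfl | hlt
  · simp
  set h₁ : ℝ := f x₁ / |deriv f x₁| with hh₁
  have h₁nonneg : 0 ≤ h₁ := div_nonneg (hf_nonneg x₁ hx₁) (abs_nonneg _)
  -- continuity of f on [x₁, x₂]
  have hcont : ContinuousOn f (Set.Icc x₁ x₂) := fun t ht =>
    ((hf_diff t (le_trans hx₁ ht.1)).continuousAt).continuousWithinAt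
  have hIntBig : IntervalIntegrable f MeasureTheory.volume x₁ x₂ := by
    apply ContinuousOn.intervalIntegrable
    rwa [Set.uIcc_of_le hx₁₂]
  -- the auxiliary function F
  set F : ℝ → ℝ := fun t => (1 - α) * (∫ x in x₁..t, f x) + (h₁ + α * (t - x₁)) * f t
    with hF
  have hαpos : (0:ℝ) < 1 - α := by linarith
  -- F is antitone on [x₁, x₂]
  have hFanti : AntitoneOn F (Set.Icc x₁ x₂) := by
    have hopen : IsOpen (Set.Ioi (0:ℝ)) := isOpen_Ioi
    have hcontIoi : ContinuousOn f (Set.Ioi (0:ℝ)) := fun t ht =>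
      ((hf_diff t (le_of_lt ht)).continuousAt).continuousWithinAt
    have hderivF : ∀ t ∈ Set.Ioo x₁ x₂,
        HasDerivAt F ((1 - α) * f t + (α * f t + (h₁ + α * (t - x₁)) * deriv f t)) t := by
      intro t ht
      have ht0 : (0:ℝ) ≤ t := le_trans hx₁ ht.1.le
      have htpos : (0:ℝ) < t := lt_of_le_of_lt hx₁ ht.1
      have hint : IntervalIntegrable f MeasureTheory.volume x₁ t := by
        apply hIntBig.mono_set
        rw [Set.uIcc_of_le ht.1.le, Set.uIcc_of_le hx₁₂]
        exact Set.Icc_subset_Icc le_rfl ht.2.le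
      have hmeas : StronglyMeasurableAtFilter f (nhds t) :=
        (hcontIoi.stronglyMeasurableAtFilter hopen) t htpos
      have hI : HasDerivAt (fun u => ∫ x in x₁..u, f x) (f t) t :=
        intervalIntegral.integral_hasDerivAt_right hint hmeas
          (hf_diff t ht0).continuousAt
      have hlin : HasDerivAt (fun u : ℝ => h₁ + α * (u - x₁)) α t := by
        simpa using (((hasDerivAt_id t).sub_const x₁).const_mul α).const_add h₁
      exact (hI.const_mul (1 - α)).add (hlin.mul (hf_diff t ht0).hasDerivAt)
    apply antitoneOn_of_deriv_nonpos (convex_Icc x₁ x₂)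
    · apply ContinuousOn.add
      · have hprim : ContinuousOn (fun t => ∫ x in x₁..t, f x) (Set.Icc x₁ x₂) := by
          have := intervalIntegral.continuousOn_primitive_interval
            (f := f) (a := x₁) (b := x₂) (μ := MeasureTheory.volume)
            (by rw [Set.uIcc_of_le hx₁₂]
                exact (intervalIntegrable_iff_integrableOn_Icc_of_le hx₁₂).mp hIntBig)
          rwa [Set.uIcc_of_le hx₁₂] at this
        exact continuousOn_const.mul hprim
      · exact Continuous.continuousOn (by continuity) |>.mul hcont
    · intro t ht
      rw [interior_Icc] at ht
      exact ((hderivF t ht).differentiableAt).differentiableWithinAt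
    · intro t ht
      rw [interior_Icc] at ht
      rw [(hderivF t ht).deriv]
      have ht0 : (0:ℝ) ≤ t := le_trans hx₁ ht.1.le
      have hd : deriv f t < 0 := hf_deriv_neg t ht0
      have habs : |deriv f t| = -deriv f t := abs_of_neg hd
      have hsr := hf_sr x₁ t hx₁ ht.1
      -- f t ≤ (h₁ + α (t - x₁)) * (- deriv f t)
      have hft : f t = (f t / |deriv f t|) * (-deriv f t) := by
        rw [habs, div_mul_cancel₀]
        exact neg_ne_zero.mpr (ne_of_lt hd)
      have key : f t ≤ (h₁ + α * (t - x₁)) * (-deriv f t) := by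
        rw [hft]
        apply mul_le_mul_of_nonneg_right (by linarith) (by linarith)
      nlinarith [key]
  have hF2 := hFanti (Set.left_mem_Icc.mpr hx₁₂) (Set.right_mem_Icc.mpr hx₁₂) hx₁₂
  -- unfold
  simp only [hF, intervalIntegral.integral_same, mul_zero, zero_add, sub_self, add_zero] at hF2
  have hfx2 : 0 ≤ f x₂ := hf_nonneg x₂ (le_trans hx₁ hx₁₂)
  have hmain : (1 - α) * (∫ x in x₁..x₂, f x) ≤ h₁ * (f x₁ - f x₂) := by
    nlinarith [mul_nonneg (mul_nonneg hα0 (by linarith : (0:ℝ) ≤ x₂ - x₁)) hfx2]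
  rw [div_mul_eq_mul_div, one_mul, div_mul_eq_mul_div, le_div_iff₀ hαpos]
  linarith [hmain]
end

section
/- Let α ∈ (0,1), let f be α-strongly regular on [0,∞), and let x₁ > 0 be a point with f(x₁) > 0 satisfying f(x₁)/|f'(x₁)| > x₁. Then f(0) < f(x₁) · (1/(1−α))^{1/α}. -/
/-- If `f` is α-strongly regular on `[0,∞)` with `α ∈ (0,1)`, and
`x₁ > 0` has `f x₁ > 0` and hazard ratio greater than `x₁`, then
`f 0 < f x₁ · (1/(1−α))^{1/α}`. -/
theorem alpha_sr_peak_bound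
    (α : ℝ) (hα0 : 0 < α) (hα1 : α < 1)
    (f : ℝ → ℝ)
    (hf_nonneg : ∀ x, 0 ≤ x → 0 ≤ f x)
    (hf_anti : ∀ x y, 0 ≤ x → x ≤ y → f y ≤ f x)
    (hf_diff : ∀ x, 0 ≤ x → DifferentiableAt ℝ f x)
    (hf_deriv_neg : ∀ x, 0 ≤ x → deriv f x < 0)
    (hf_sr : ∀ x₁ x₂, 0 ≤ x₁ → x₁ < x₂ →
      f x₂ / |deriv f x₂| - f x₁ / |deriv f x₁| ≤ α * (x₂ - x₁))
    (x₁ : ℝ) (hx₁ : 0 < x₁) (hfx₁ : 0 < f x₁)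
    (hhaz : x₁ < f x₁ / |deriv f x₁|) :
    f 0 < f x₁ * (1 / (1 - α)) ^ (1 / α : ℝ) := by
  have hα1' : (0:ℝ) < 1 - α := by linarith
  set c : ℝ := (1 - α) * x₁ with hc
  have hc0 : 0 < c := by positivity
  have hfpos : ∀ x ∈ Set.Icc (0:ℝ) x₁, 0 < f x := fun x hx =>
    lt_of_lt_of_le hfx₁ (hf_anti x x₁ hx.1 hx.2)
  have hlin : ∀ x ∈ Set.Icc (0:ℝ) x₁, 0 < c + α * x := by
    intro x hx
    have : 0 ≤ α * x := mul_nonneg hα0.le hx.1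
    linarith
  set φ : ℝ → ℝ := fun x => Real.log (f x) + (1/α) * Real.log (c + α * x) with hφ
  have hmono : StrictMonoOn φ (Set.Icc 0 x₁) := by
    apply strictMonoOn_of_deriv_pos (convex_Icc 0 x₁)
    · apply ContinuousOn.add
      · intro x hx
        exact (((hf_diff x hx.1).continuousAt).log (ne_of_gt (hfpos x hx))).continuousWithinAt
      · apply ContinuousOn.mul continuousOn_const
        intro x hx
        exact ((by fun_prop : ContinuousAt (fun y : ℝ => c + α * y) x).log
          (ne_of_gt (hlin x hx))).continuousWithinAt
    · intro x hx
      rw [interior_Icc] at hx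
      have hx0 : 0 ≤ x := hx.1.le
      have hfx : 0 < f x := hfpos x ⟨hx0, hx.2.le⟩
      have hlinx : 0 < c + α * x := hlin x ⟨hx0, hx.2.le⟩
      have h1 : HasDerivAt (fun y => Real.log (f y)) (deriv f x / f x) x :=
        HasDerivAt.log (hf_diff x hx0).hasDerivAt (ne_of_gt hfx)
      have h2 : HasDerivAt (fun y : ℝ => c + α * y) α x := by
        simpa using ((hasDerivAt_id x).const_mul α).const_add c
      have h3 : HasDerivAt (fun y => Real.log (c + α * y)) (α / (c + α * x)) x :=
        h2.log (ne_of_gt hlinx)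
      have hφd : HasDerivAt φ (deriv f x / f x + (1/α) * (α / (c + α * x))) x :=
        h1.add (h3.const_mul (1/α))
      rw [hφd.deriv]
      have hsimp : (1/α) * (α / (c + α * x)) = 1 / (c + α * x) := by
        field_simp
      rw [hsimp]
      -- hazard bound
      have hD : 0 < |deriv f x| := abs_pos.mpr (ne_of_lt (hf_deriv_neg x hx0))
      have hsr := hf_sr x x₁ hx0 hx.2
      have hhazx : c + α * x < f x / |deriv f x| := by
        have : f x₁ / |deriv f x₁| - α * (x₁ - x) ≤ f x / |deriv f x| := by linarith
        have h2' : x₁ - α * (x₁ - x) < f x / |deriv f x| := by linarith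
        have : c + α * x = x₁ - α * (x₁ - x) := by ring
        linarith
      have habs : |deriv f x| = -deriv f x := abs_of_neg (hf_deriv_neg x hx0)
      have hkey : |deriv f x| / f x < 1 / (c + α * x) := by
        rw [div_lt_div_iff₀ hfx hlinx]
        have h4 := (lt_div_iff₀ hD).mp hhazx
        nlinarith
      have : deriv f x / f x = -(|deriv f x| / f x) := by
        rw [habs]; ring
      rw [this]
      linarith
  have hkey := hmono (Set.left_mem_Icc.mpr hx₁.le) (Set.right_mem_Icc.mpr hx₁.le) hx₁
  have hc1 : c + α * x₁ = x₁ := by ring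
  have hf0 : 0 < f 0 := hfpos 0 (Set.left_mem_Icc.mpr hx₁.le)
  have hφ0 : φ 0 = Real.log (f 0) + (1/α) * Real.log c := by
    simp [hφ]
  have hφx : φ x₁ = Real.log (f x₁) + (1/α) * Real.log x₁ := by
    simp [hφ, hc1]
  rw [hφ0, hφx] at hkey
  -- turn into log inequality
  have hrpos : (0:ℝ) < (1 / (1 - α)) ^ (1 / α : ℝ) := Real.rpow_pos_of_pos (by positivity) _
  rw [← Real.log_lt_log_iff hf0 (by positivity)]
  rw [Real.log_mul (ne_of_gt hfx₁) (ne_of_gt hrpos), Real.log_rpow (by positivity)]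
  have hlogdiv : Real.log (1 / (1 - α)) = Real.log x₁ - Real.log c := by
    rw [hc, Real.log_div one_ne_zero (ne_of_gt hα1'), Real.log_mul (ne_of_gt hα1') (ne_of_gt hx₁)]
    simp
  rw [hlogdiv]
  linarith
end

section
/- Let α ∈ (0,1), let f be α-strongly regular on [0,∞), and let x₁ > 0 be a point with f(x₁) > 0 satisfying f(0) ≥ (1/(1−α))^{1/α} · f(x₁). Then f(x₁)/|f'(x₁)| ≤ x₁. -/
/-! If the hazard ratio `h₁` at `x₁` exceeded `x₁`, strong regularity would bound the hazard
ratio on `[0, x₁]` from below by the affine function `u x = h₁ - α (x₁ - x)`, which is then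
positive. That makes `f · u ^ (1/α)` nondecreasing on `[0, x₁]`, so
`f 0 / f x₁ ≤ (h₁ / u 0) ^ (1/α)`, and the peak hypothesis forces `u 0 ≤ (1 - α) h₁`,
which is `h₁ ≤ x₁`. -/

open Set

theorem add_mul_deriv_nonneg_of_le_div_abs_deriv {f : ℝ → ℝ} {x u : ℝ} (hd : deriv f x < 0)
    (hu : u ≤ f x / |deriv f x|) : 0 ≤ f x + u * deriv f x := by
  rw [abs_of_neg hd, le_div_iff₀ (neg_pos.mpr hd)] at hu
  linarith

theorem HasDerivAt.mul_affine_rpow_inv {f : ℝ → ℝ} {f' c α x : ℝ} (hf : HasDerivAt f f' x)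
    (hα : α ≠ 0) (hu : 0 < c + α * x) :
    HasDerivAt (fun y ↦ f y * (c + α * y) ^ α⁻¹)
      ((c + α * x) ^ (α⁻¹ - 1) * (f x + (c + α * x) * f')) x := by
  have hlin : HasDerivAt (fun y ↦ c + α * y) α x := by
    simpa using ((hasDerivAt_id x).const_mul α).const_add c
  refine (hf.mul (hlin.rpow_const (p := α⁻¹) (Or.inl hu.ne'))).congr_deriv ?_
  rw [Real.rpow_sub_one hu.ne']
  field_simp
  ring

theorem monotoneOn_mul_affine_rpow_inv {f : ℝ → ℝ} {a b c α : ℝ} (hα : α ≠ 0)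
    (hf : ∀ x ∈ Icc a b, DifferentiableAt ℝ f x) (hu : ∀ x ∈ Icc a b, 0 < c + α * x)
    (hkey : ∀ x ∈ Icc a b, 0 ≤ f x + (c + α * x) * deriv f x) :
    MonotoneOn (fun x ↦ f x * (c + α * x) ^ α⁻¹) (Icc a b) := by
  have hderiv : ∀ x ∈ Icc a b, HasDerivAt (fun y ↦ f y * (c + α * y) ^ α⁻¹)
      ((c + α * x) ^ (α⁻¹ - 1) * (f x + (c + α * x) * deriv f x)) x := fun x hx ↦
    (hf x hx).hasDerivAt.mul_affine_rpow_inv hα (hu x hx)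
  refine monotoneOn_of_deriv_nonneg (convex_Icc a b)
    (fun x hx ↦ (hderiv x hx).continuousAt.continuousWithinAt)
    (fun x hx ↦ (hderiv x (interior_subset hx)).differentiableAt.differentiableWithinAt)
    fun x hx ↦ ?_
  have hx' := interior_subset hx
  rw [(hderiv x hx').deriv]
  exact mul_nonneg (Real.rpow_nonneg (hu x hx').le _) (hkey x hx')

theorem alpha_sr_hazard_of_peak_general
    (α : ℝ) (hα0 : 0 < α) (hα1 : α < 1)
    (f : ℝ → ℝ)
    (hf_diff : ∀ x, 0 ≤ x → DifferentiableAt ℝ f x)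
    (hf_deriv_neg : ∀ x, 0 ≤ x → deriv f x < 0)
    (hf_sr : ∀ x₁ x₂, 0 ≤ x₁ → x₁ < x₂ →
      f x₂ / |deriv f x₂| - f x₁ / |deriv f x₁| ≤ α * (x₂ - x₁))
    (x₁ : ℝ) (hx₁ : 0 < x₁)
    (hpeak : (1 / (1 - α)) ^ (1 / α : ℝ) * f x₁ ≤ f 0) :
    f x₁ / |deriv f x₁| ≤ x₁ := by
  by_contra! hlt
  set h₁ := f x₁ / |deriv f x₁|
  set c := h₁ - α * x₁
  have hc : 0 < c := by nlinarith
  have hfx₁ : 0 < f x₁ :=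
    (div_pos_iff_of_pos_right (abs_pos.2 (hf_deriv_neg x₁ hx₁.le).ne)).1 (hx₁.trans hlt)
  have hhazard : ∀ x ∈ Icc 0 x₁, c + α * x ≤ f x / |deriv f x| := by
    rintro x ⟨hx0, hxx₁⟩
    rcases hxx₁.lt_or_eq with hxx₁ | rfl
    · linarith [hf_sr x x₁ hx0 hxx₁]
    · simp [c, h₁]
  have hmono := monotoneOn_mul_affine_rpow_inv hα0.ne' (fun x hx ↦ hf_diff x hx.1)
    (fun x hx ↦ by nlinarith [hx.1]) fun x hx ↦
      add_mul_deriv_nonneg_of_le_div_abs_deriv (hf_deriv_neg x hx.1) (hhazard x hx)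
  have hG : f 0 * c ^ α⁻¹ ≤ f x₁ * h₁ ^ α⁻¹ := by
    simpa [c] using hmono (left_mem_Icc.2 hx₁.le) (right_mem_Icc.2 hx₁.le) hx₁.le
  have hcompare : f x₁ * (c / (1 - α)) ^ α⁻¹ ≤ f x₁ * h₁ ^ α⁻¹ := calc
    f x₁ * (c / (1 - α)) ^ α⁻¹ = (1 / (1 - α)) ^ (1 / α) * f x₁ * c ^ α⁻¹ := by
      rw [div_eq_mul_one_div c, Real.mul_rpow hc.le (div_nonneg zero_le_one (by linarith)), one_div α]; ring
    _ ≤ f 0 * c ^ α⁻¹ := by gcongr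
    _ ≤ f x₁ * h₁ ^ α⁻¹ := hG
  have hc_le : c / (1 - α) ≤ h₁ := (Real.rpow_le_rpow_iff (by positivity) (by positivity)
    (by positivity)).1 (le_of_mul_le_mul_left hcompare hfx₁)
  rw [div_le_iff₀ (by linarith)] at hc_le
  nlinarith

/-- If `f` is α-strongly regular on `[0,∞)` with `α ∈ (0,1)`, and
`x₁ > 0` has `f x₁ > 0` and `f 0 ≥ (1/(1−α))^{1/α} · f x₁`, then the hazard ratio of
`f` at `x₁` is at most `x₁`. -/
theorem alpha_sr_hazard_of_peak
    (α : ℝ) (hα0 : 0 < α) (hα1 : α < 1)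
    (f : ℝ → ℝ)
    (hf_nonneg : ∀ x, 0 ≤ x → 0 ≤ f x)
    (hf_anti : ∀ x y, 0 ≤ x → x ≤ y → f y ≤ f x)
    (hf_diff : ∀ x, 0 ≤ x → DifferentiableAt ℝ f x)
    (hf_deriv_neg : ∀ x, 0 ≤ x → deriv f x < 0)
    (hf_sr : ∀ x₁ x₂, 0 ≤ x₁ → x₁ < x₂ →
      f x₂ / |deriv f x₂| - f x₁ / |deriv f x₁| ≤ α * (x₂ - x₁))
    (x₁ : ℝ) (hx₁ : 0 < x₁) (hfx₁ : 0 < f x₁)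
    (hpeak : (1 / (1 - α)) ^ (1 / α : ℝ) * f x₁ ≤ f 0) :
    f x₁ / |deriv f x₁| ≤ x₁ :=
  alpha_sr_hazard_of_peak_general α hα0 hα1 f hf_diff hf_deriv_neg hf_sr x₁ hx₁ hpeak
end

section
/- Let f be 0-strongly regular (i.e., have a monotone hazard rate: the hazard ratio f(x)/|f'(x)| is nonincreasing in x on [0,∞)), and let x₁ > 0 be a point with f(x₁) > 0 satisfying f(x₁)/|f'(x₁)| > x₁. Then f(0) < e · f(x₁), where e is Euler's number. -/
/-! The monotone hazard rate turns the single inequality `x₁ < f x₁ / |f' x₁|` into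
`x₁ · |f' x| < f x` on all of `[0, x₁]`, i.e. `f' + f / x₁ > 0` there.
Hence `f x · exp (x / x₁)` is strictly increasing on `[0, x₁]`, and comparing its values at the
endpoints gives `f 0 < e · f x₁`. -/

open Real Set

theorem hasDerivAt_mul_exp_div {f : ℝ → ℝ} {x c : ℝ} (hf : DifferentiableAt ℝ f x) (hc : c ≠ 0) :
    HasDerivAt (fun y => f y * exp (y / c)) ((c * deriv f x + f x) * exp (x / c) / c) x := by
  refine (hf.hasDerivAt.mul ((hasDerivAt_id' x).div_const c).exp).congr_deriv ?_
  field_simp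

theorem strictMonoOn_mul_exp_div {f : ℝ → ℝ} {a b c : ℝ} (hc : 0 < c)
    (hf : ∀ x ∈ Icc a b, DifferentiableAt ℝ f x)
    (hlt : ∀ x ∈ Ioo a b, -(c * deriv f x) < f x) :
    StrictMonoOn (fun x => f x * exp (x / c)) (Icc a b) := by
  refine strictMonoOn_of_deriv_pos (convex_Icc a b)
    (fun x hx => (hasDerivAt_mul_exp_div (hf x hx) hc.ne').continuousAt.continuousWithinAt)
    (fun x hx => ?_)
  rw [interior_Icc] at hx
  rw [(hasDerivAt_mul_exp_div (hf x (Ioo_subset_Icc_self hx)) hc.ne').deriv]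
  have : 0 < c * deriv f x + f x := by linarith [hlt x hx]
  positivity

theorem mhr_peak_bound_general
    (f : ℝ → ℝ)
    (hf_diff : ∀ x, 0 ≤ x → DifferentiableAt ℝ f x)
    (hf_deriv_neg : ∀ x, 0 ≤ x → deriv f x < 0)
    (hf_mhr : ∀ x₁ x₂, 0 ≤ x₁ → x₁ ≤ x₂ →
      f x₂ / |deriv f x₂| ≤ f x₁ / |deriv f x₁|)
    (x₁ : ℝ) (hx₁ : 0 < x₁)
    (hhaz : x₁ < f x₁ / |deriv f x₁|) :
    f 0 < Real.exp 1 * f x₁ := by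
  have hhaz_Ioo : ∀ x ∈ Ioo 0 x₁, -(x₁ * deriv f x) < f x := by
    intro x hx
    have hneg := hf_deriv_neg x hx.1.le
    have : x₁ < f x / -deriv f x := by
      rw [← abs_of_neg hneg]
      exact hhaz.trans_le (hf_mhr x x₁ hx.1.le hx.2.le)
    rw [lt_div_iff₀ (neg_pos.2 hneg)] at this
    linarith
  have hmono := strictMonoOn_mul_exp_div hx₁ (fun x hx => hf_diff x hx.1) hhaz_Ioo
    (left_mem_Icc.2 hx₁.le) (right_mem_Icc.2 hx₁.le) hx₁
  simpa [div_self hx₁.ne', mul_comm] using hmono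

/-- If `f` is 0-strongly regular (monotone hazard rate) on `[0,∞)`,
and `x₁ > 0` has `f x₁ > 0` and hazard ratio greater than `x₁`, then
`f 0 < e · f x₁`. -/
theorem mhr_peak_bound
    (f : ℝ → ℝ)
    (hf_nonneg : ∀ x, 0 ≤ x → 0 ≤ f x)
    (hf_anti : ∀ x y, 0 ≤ x → x ≤ y → f y ≤ f x)
    (hf_diff : ∀ x, 0 ≤ x → DifferentiableAt ℝ f x)
    (hf_deriv_neg : ∀ x, 0 ≤ x → deriv f x < 0)
    (hf_mhr : ∀ x₁ x₂, 0 ≤ x₁ → x₁ ≤ x₂ →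
      f x₂ / |deriv f x₂| ≤ f x₁ / |deriv f x₁|)
    (x₁ : ℝ) (hx₁ : 0 < x₁) (hfx₁ : 0 < f x₁)
    (hhaz : x₁ < f x₁ / |deriv f x₁|) :
    f 0 < Real.exp 1 * f x₁ :=
  mhr_peak_bound_general f hf_diff hf_deriv_neg hf_mhr x₁ hx₁ hhaz
end

section
/- Let f be 0-strongly regular (i.e., have a monotone hazard rate: the hazard ratio f(x)/|f'(x)| is nonincreasing in x on [0,∞)), and let x₁ > 0 be a point with f(x₁) > 0 satisfying f(0) ≥ e · f(x₁), where e is Euler's number. Then f(x₁)/|f'(x₁)| ≤ x₁. -/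
/-- If `f` is 0-strongly regular (monotone hazard rate) on `[0,∞)`,
and `x₁ > 0` has `f x₁ > 0` and `f 0 ≥ e · f x₁`, then the hazard ratio of `f`
at `x₁` is at most `x₁`. -/
theorem mhr_hazard_of_peak
    (f : ℝ → ℝ)
    (hf_nonneg : ∀ x, 0 ≤ x → 0 ≤ f x)
    (hf_anti : ∀ x y, 0 ≤ x → x ≤ y → f y ≤ f x)
    (hf_diff : ∀ x, 0 ≤ x → DifferentiableAt ℝ f x)
    (hf_deriv_neg : ∀ x, 0 ≤ x → deriv f x < 0)
    (hf_mhr : ∀ x₁ x₂, 0 ≤ x₁ → x₁ ≤ x₂ →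
      f x₂ / |deriv f x₂| ≤ f x₁ / |deriv f x₁|)
    (x₁ : ℝ) (hx₁ : 0 < x₁) (hfx₁ : 0 < f x₁)
    (hpeak : Real.exp 1 * f x₁ ≤ f 0) :
    f x₁ / |deriv f x₁| ≤ x₁ := by
  set h := f x₁ / |deriv f x₁| with hh_def
  have hd₁ : deriv f x₁ < 0 := hf_deriv_neg x₁ hx₁.le
  have hh : 0 < h := div_pos hfx₁ (abs_pos.mpr hd₁.ne)
  -- positivity of f on [0, x₁]
  have hfpos : ∀ x ∈ Set.Icc (0:ℝ) x₁, 0 < f x := fun x hx =>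
    lt_of_lt_of_le hfx₁ (hf_anti x x₁ hx.1 hx.2)
  -- g x = log (f x) + x / h is monotone on [0, x₁]
  set g : ℝ → ℝ := fun x => Real.log (f x) + x / h with hg_def
  have hgd : ∀ x ∈ Set.Icc (0:ℝ) x₁,
      HasDerivAt g (deriv f x / f x + 1 / h) x := by
    intro x hx
    have h1 : HasDerivAt (fun x => Real.log (f x)) (deriv f x / f x) x :=
      ((hf_diff x hx.1).hasDerivAt).log (hfpos x hx).ne'
    have h2 : HasDerivAt (fun x : ℝ => x / h) (1 / h) x := by
      simpa using (hasDerivAt_id x).div_const h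
    exact h1.add h2
  have hmono : MonotoneOn g (Set.Icc 0 x₁) := by
    apply monotoneOn_of_deriv_nonneg (convex_Icc 0 x₁)
    · exact fun x hx => ((hgd x hx).continuousAt).continuousWithinAt
    · rw [interior_Icc]
      exact fun x hx => ((hgd x (Set.mem_Icc_of_Ioo hx)).differentiableAt).differentiableWithinAt
    · rw [interior_Icc]
      intro x hx
      have hx' : x ∈ Set.Icc (0:ℝ) x₁ := Set.mem_Icc_of_Ioo hx
      rw [(hgd x hx').deriv]
      have hd : deriv f x < 0 := hf_deriv_neg x hx'.1
      have hfx : 0 < f x := hfpos x hx'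
      have hmhr := hf_mhr x x₁ hx'.1 hx'.2
      rw [abs_of_neg hd] at hmhr
      -- h ≤ f x / (-deriv f x)
      have h1 : h * (-deriv f x) ≤ f x := (le_div_iff₀ (neg_pos.mpr hd)).mp hmhr
      have h2 : (-deriv f x) / f x ≤ 1 / h := by
        rw [div_le_div_iff₀ hfx hh]
        nlinarith
      have h3 : -(deriv f x / f x) ≤ 1 / h := by
        rw [← neg_div]; exact h2
      linarith
  have key := hmono (Set.left_mem_Icc.mpr hx₁.le) (Set.right_mem_Icc.mpr hx₁.le) hx₁.le
  have hg0 : g 0 = Real.log (f 0) := by simp [hg_def]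
  have hg1 : g x₁ = Real.log (f x₁) + x₁ / h := rfl
  have hf0pos : 0 < f 0 := hfpos 0 (Set.left_mem_Icc.mpr hx₁.le)
  have hlog : Real.log (Real.exp 1 * f x₁) ≤ Real.log (f 0) :=
    Real.log_le_log (by positivity) hpeak
  rw [Real.log_mul (Real.exp_ne_zero 1) hfx₁.ne', Real.log_exp] at hlog
  rw [hg0, hg1] at key
  have h4 : 1 ≤ x₁ / h := by linarith
  exact (one_le_div hh).mp h4
end

section
/- Let C : ℝ → ℝ be a doubly convex production cost function: C(0) = 0, C is differentiable on [0,∞) with derivative c satisfying c(0) = 0, and c is nonnegative, nondecreasing, and convex on [0,∞). Then for every y ≥ 0, C(y) ≤ (1/2)·c(y)·y. -/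
/-!
Fix `y > 0`. Convexity of `c` with `c 0 = 0` puts `c` below its chord through the origin on
`[0, y]`, i.e. `c x ≤ (c y / y) * x`. Hence `C x - (c y / y) * x ^ 2 / 2` has nonpositive
derivative on `[0, y]`, so its value at `y` is at most its value `C 0 = 0` at `0`.
-/

open Set

theorem ConvexOn.map_smul_le_smul_of_map_zero {𝕜 E β : Type*}
    [Ring 𝕜] [PartialOrder 𝕜] [IsOrderedRing 𝕜] [AddCommMonoid E] [Module 𝕜 E]
    [AddCommMonoid β] [PartialOrder β] [Module 𝕜 β]
    {s : Set E} {f : E → β} (hf : ConvexOn 𝕜 s f) (h0 : (0 : E) ∈ s) (hf0 : f 0 = 0)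
    {x : E} (hx : x ∈ s) {t : 𝕜} (ht0 : 0 ≤ t) (ht1 : t ≤ 1) :
    f (t • x) ≤ t • f x := by
  simpa [hf0] using hf.2 h0 hx (sub_nonneg.2 ht1) ht0 (sub_add_cancel 1 t)

theorem ConvexOn.mul_map_le_mul_map_of_map_zero {f : ℝ → ℝ} (hf : ConvexOn ℝ (Ici 0) f)
    (hf0 : f 0 = 0) {x y : ℝ} (hx : 0 ≤ x) (hxy : x ≤ y) :
    y * f x ≤ x * f y := by
  rcases (hx.trans hxy).eq_or_lt with rfl | hy
  · simp [le_antisymm hxy hx, hf0]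
  have key := hf.map_smul_le_smul_of_map_zero self_mem_Ici hf0 (mem_Ici.2 hy.le)
    (div_nonneg hx hy.le) ((div_le_one hy).2 hxy)
  rw [smul_eq_mul, smul_eq_mul, div_mul_cancel₀ x hy.ne'] at key
  calc y * f x ≤ y * (x / y * f y) := mul_le_mul_of_nonneg_left key hy.le
    _ = x * f y := by field_simp

theorem le_add_mul_sq_div_two_of_hasDerivAt_le_mul {F f : ℝ → ℝ} {k y : ℝ} (hy : 0 ≤ y)
    (hF : ∀ x ∈ Icc 0 y, HasDerivAt F (f x) x) (hf : ∀ x ∈ Icc 0 y, f x ≤ k * x) :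
    F y ≤ F 0 + k * y ^ 2 / 2 := by
  set G : ℝ → ℝ := fun x ↦ F x - k * x ^ 2 / 2
  have hG : ∀ x ∈ Icc 0 y, HasDerivAt G (f x - k * x) x := fun x hx ↦
    ((hF x hx).sub ((hasDerivAt_pow 2 x).const_mul k |>.div_const 2)).congr_deriv (by ring)
  have hanti : AntitoneOn G (Icc 0 y) :=
    antitoneOn_of_hasDerivWithinAt_nonpos (convex_Icc 0 y)
      (fun x hx ↦ (hG x hx).continuousAt.continuousWithinAt)
      (fun x hx ↦ (hG x (interior_subset hx)).hasDerivWithinAt)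
      (fun x hx ↦ sub_nonpos.2 (hf x (interior_subset hx)))
  have := hanti (left_mem_Icc.2 hy) (right_mem_Icc.2 hy) hy
  simp only [G] at this
  linarith

theorem doubly_convex_cost_bound_general
    (C c : ℝ → ℝ)
    (hC0 : C 0 = 0)
    (hderiv : ∀ x, 0 ≤ x → HasDerivAt C (c x) x)
    (hc0 : c 0 = 0)
    (hc_convex : ConvexOn ℝ (Set.Ici (0 : ℝ)) c) :
    ∀ y, 0 ≤ y → C y ≤ (1 / 2) * c y * y := by
  intro y hy
  rcases hy.eq_or_lt with rfl | hy
  · simp [hC0]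
  have hchord : ∀ x ∈ Icc 0 y, c x ≤ c y / y * x := fun x hx ↦ by
    rw [div_mul_eq_mul_div, le_div_iff₀' hy, mul_comm (c y)]
    exact hc_convex.mul_map_le_mul_map_of_map_zero hc0 hx.1 hx.2
  have := le_add_mul_sq_div_two_of_hasDerivAt_le_mul hy.le (fun x hx ↦ hderiv x hx.1) hchord
  calc C y ≤ C 0 + c y / y * y ^ 2 / 2 := this
    _ = 1 / 2 * c y * y := by rw [hC0]; field_simp; ring

/-- A doubly convex production cost function `C` with derivative `c`
satisfies `C(y) ≤ (1/2)·c(y)·y` for every `y ≥ 0`. -/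
theorem doubly_convex_cost_bound
    (C c : ℝ → ℝ)
    (hC0 : C 0 = 0)
    (hderiv : ∀ x, 0 ≤ x → HasDerivAt C (c x) x)
    (hc0 : c 0 = 0)
    (hc_nonneg : ∀ x, 0 ≤ x → 0 ≤ c x)
    (hc_mono : ∀ x y, 0 ≤ x → x ≤ y → c x ≤ c y)
    (hc_convex : ConvexOn ℝ (Set.Ici (0 : ℝ)) c) :
    ∀ y, 0 ≤ y → C y ≤ (1 / 2) * c y * y :=
  doubly_convex_cost_bound_general C c hC0 hderiv hc0 hc_convex
end

section
/- Let α ∈ (0,1), λmax > 0, and set p̃ = λmax·(1−α)^{1/α}. Let B be a finite index set; for each i ∈ B let λ_i : ℝ → ℝ be nonincreasing and nonnegative on [0,∞) with λ_i(x) ≤ λmax for all x ≥ 0, let x_i ≥ 0 satisfy λ_i(x_i) ≥ p̃, and suppose K is a real number with 0 ≤ 2·K ≤ ∑_{i∈B} λ_i(x_i)·x_i. Then ∑_{i∈B} (∫_0^{x_i} λ_i(x) dx) − K ≤ (2·(1/(1−α))^{1/α} − 1)·(∑_{i∈B} λ_i(x_i)·x_i − K). -/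
/-- Claim `clm_aboveandbelowthresh`, part 1. If every buyer's
price `λ_i(x_i)` is at least `p̃ = lamMax·(1−α)^{1/α}` and the production cost `K`
satisfies `2K ≤ income`, then social welfare is at most
`(2·(1/(1−α))^{1/α} − 1)` times profit. -/
theorem welfare_le_profit_above_threshold
    {ι : Type*} (B : Finset ι)
    (α lamMax : ℝ) (hα0 : 0 < α) (hα1 : α < 1) (hlamMax : 0 < lamMax)
    (lam : ι → ℝ → ℝ) (x : ι → ℝ) (K : ℝ)
    (hlam_anti : ∀ i ∈ B, ∀ u v, 0 ≤ u → u ≤ v → lam i v ≤ lam i u)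
    (hlam_nonneg : ∀ i ∈ B, ∀ u, 0 ≤ u → 0 ≤ lam i u)
    (hlam_le : ∀ i ∈ B, ∀ u, 0 ≤ u → lam i u ≤ lamMax)
    (hx : ∀ i ∈ B, 0 ≤ x i)
    (hprice : ∀ i ∈ B, lamMax * (1 - α) ^ (1 / α : ℝ) ≤ lam i (x i))
    (hK0 : 0 ≤ K)
    (hK : 2 * K ≤ ∑ i ∈ B, lam i (x i) * x i) :
    (∑ i ∈ B, ∫ u in (0 : ℝ)..(x i), lam i u) - K ≤
      (2 * (1 / (1 - α)) ^ (1 / α : ℝ) - 1) * ((∑ i ∈ B, lam i (x i) * x i) - K) := by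
  set c : ℝ := (1 / (1 - α)) ^ (1 / α : ℝ) with hc
  have h1α : (0:ℝ) < 1 - α := by linarith
  have hc1 : 1 ≤ c := by
    apply Real.one_le_rpow
    · rw [le_div_iff₀ h1α]; linarith
    · positivity
  have hmul : lamMax * ((1 - α) ^ (1 / α : ℝ) * c) = lamMax := by
    rw [hc, ← Real.mul_rpow (by linarith) (by positivity)]
    rw [mul_one_div, div_self (ne_of_gt h1α), Real.one_rpow, mul_one]
  -- per-buyer bound
  have key : ∀ i ∈ B, (∫ u in (0:ℝ)..(x i), lam i u) ≤ c * (lam i (x i) * x i) := by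
    intro i hi
    have hxi := hx i hi
    have hint : IntervalIntegrable (lam i) MeasureTheory.volume 0 (x i) := by
      apply AntitoneOn.intervalIntegrable
      intro u hu v hv huv
      rw [Set.uIcc_of_le hxi] at hu hv
      exact hlam_anti i hi u v hu.1 huv
    have hle : (∫ u in (0:ℝ)..(x i), lam i u) ≤ lamMax * x i := by
      have := intervalIntegral.integral_mono_on hxi hint
        (intervalIntegrable_const (c := lamMax))
        (fun u hu => hlam_le i hi u hu.1)
      simpa [smul_eq_mul, mul_comm] using this
    have hlm : lamMax ≤ c * lam i (x i) := by
      have hp := hprice i hi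
      have hcpos : 0 < c := lt_of_lt_of_le one_pos hc1
      nlinarith [hp, hmul, Real.rpow_nonneg (le_of_lt h1α) (1/α : ℝ)]
    calc (∫ u in (0:ℝ)..(x i), lam i u) ≤ lamMax * x i := hle
      _ ≤ (c * lam i (x i)) * x i := mul_le_mul_of_nonneg_right hlm hxi
      _ = c * (lam i (x i) * x i) := by ring
  have hsum : (∑ i ∈ B, ∫ u in (0:ℝ)..(x i), lam i u) ≤
      c * ∑ i ∈ B, lam i (x i) * x i := by
    rw [Finset.mul_sum]
    exact Finset.sum_le_sum key
  nlinarith [mul_nonneg (sub_nonneg.2 hc1) (sub_nonneg.2 hK), hsum]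
end

section
/- Let α ∈ (0,1), let f be α-strongly regular on [0,∞), and let 0 < x₁ ≤ x₂ with f(x₁) > 0 and f(0) ≥ (1/(1−α))^{1/α} · f(x₁). Then ∫_{x₁}^{x₂} f(x) dx ≤ (1/(1−α)) · x₁ · (f(x₁) − f(x₂)); in particular ∫_{x₁}^{x₂} f(x) dx ≤ (1/(1−α)) · x₁ · f(x₁). -/
/-!
With `h = f / |f'|` the hazard ratio, strong regularity says that `h` grows with slope at most `α`.
On `[x₁, x₂]` this gives `f t ≤ (h x₁ + α (t - x₁)) (-f' t)`, which makes
`(1 - α) ∫_{x₁}^t f + (h x₁ + α (t - x₁)) f t` nonincreasing, so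
`(1 - α) ∫_{x₁}^{x₂} f ≤ h x₁ (f x₁ - f x₂)`.
On `[0, x₁]` it gives `h t ≥ h x₁ - α (x₁ - t)`, which makes
`f t (h x₁ - α (x₁ - t)) ^ (1/α)` nondecreasing; comparing its values at `0` and `x₁`
with the peak condition yields `h x₁ ≤ x₁`.
-/

open Set MeasureTheory

theorem monotoneOn_mul_rpow_affine_of_mul_neg_deriv_le {f f' : ℝ → ℝ} {a b c α : ℝ}
    (hα : α ≠ 0) (hf : ∀ y ∈ Icc a b, HasDerivAt f (f' y) y)
    (hL : ∀ y ∈ Icc a b, 0 < c + α * y)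
    (hle : ∀ y ∈ Icc a b, (c + α * y) * -f' y ≤ f y) :
    MonotoneOn (fun y => f y * (c + α * y) ^ (1 / α)) (Icc a b) := by
  have hderiv : ∀ y ∈ Icc a b, HasDerivAt (fun y => f y * (c + α * y) ^ (1 / α))
      ((c + α * y) ^ (1 / α - 1) * (f y + (c + α * y) * f' y)) y := by
    intro y hy
    have hLy := (hL y hy).ne'
    have hL' : HasDerivAt (fun y => c + α * y) α y := by
      simpa using ((hasDerivAt_id y).const_mul α).const_add c
    refine ((hf y hy).mul (hL'.rpow_const (p := 1 / α) (Or.inl hLy))).congr_deriv ?_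
    rw [Real.rpow_sub_one hLy]
    field_simp
    ring
  refine monotoneOn_of_hasDerivWithinAt_nonneg (convex_Icc a b)
    (HasDerivAt.continuousOn hderiv) (fun y hy => (hderiv y (interior_subset hy)).hasDerivWithinAt)
    fun y hy => ?_
  have hy := interior_subset hy
  exact mul_nonneg (Real.rpow_nonneg (hL y hy).le _) (by linarith [hle y hy])

theorem antitoneOn_integral_add_mul_of_le_mul_neg_deriv {f f' : ℝ → ℝ} {a b c α : ℝ}
    (hf : ∀ t ∈ Icc a b, HasDerivAt f (f' t) t)
    (hle : ∀ t ∈ Icc a b, f t ≤ (c + α * t) * -f' t) :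
    AntitoneOn (fun t => (1 - α) * (∫ x in a..t, f x) + (c + α * t) * f t) (Icc a b) := by
  rcases lt_or_ge b a with hba | hab
  · simp [Icc_eq_empty_of_lt hba, subsingleton_empty.antitoneOn]
  have hcont : ContinuousOn f (Icc a b) := HasDerivAt.continuousOn hf
  have hprim : ContinuousOn (fun t => ∫ x in a..t, f x) (Icc a b) := by
    have := intervalIntegral.continuousOn_primitive_interval (μ := volume) (f := f) (a := a)
      (b := b)
    rw [uIcc_of_le hab] at this
    exact this hcont.integrableOn_Icc
  have hderiv : ∀ t ∈ Ioo a b,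
      HasDerivAt (fun t => (1 - α) * (∫ x in a..t, f x) + (c + α * t) * f t)
        (f t - (c + α * t) * -f' t) t := by
    intro t ht
    have hprim' : HasDerivAt (fun u => ∫ x in a..u, f x) (f t) t :=
      intervalIntegral.integral_hasDerivAt_right
        ((hcont.mono (Icc_subset_Icc_right ht.2.le)).intervalIntegrable_of_Icc ht.1.le)
        ((hcont.mono Ioo_subset_Icc_self).stronglyMeasurableAtFilter isOpen_Ioo t ht)
        (hf t (Ioo_subset_Icc_self ht)).continuousAt
    have hL' : HasDerivAt (fun t => c + α * t) α t := by
      simpa using ((hasDerivAt_id t).const_mul α).const_add c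
    refine ((hprim'.const_mul (1 - α)).add
      (hL'.mul (hf t (Ioo_subset_Icc_self ht)))).congr_deriv ?_
    ring
  have hL : ContinuousOn (fun t => c + α * t) (Icc a b) := by fun_prop
  refine antitoneOn_of_hasDerivWithinAt_nonpos (convex_Icc a b)
    (f' := fun t => f t - (c + α * t) * -f' t) ((continuousOn_const.mul hprim).add (hL.mul hcont))
    (fun t ht => ?_) fun t ht => ?_ <;>
    rw [interior_Icc] at ht
  · exact (hderiv t ht).hasDerivWithinAt
  · linarith [hle t (Ioo_subset_Icc_self ht)]

noncomputable def hazardRatio (f : ℝ → ℝ) (x : ℝ) : ℝ := f x / |deriv f x|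

theorem eq_hazardRatio_mul_neg_deriv {f : ℝ → ℝ} {x : ℝ} (h : deriv f x < 0) :
    f x = hazardRatio f x * -deriv f x := by
  rw [hazardRatio, abs_of_neg h, div_mul_cancel₀ _ (neg_ne_zero.2 h.ne)]

section StronglyRegular

variable {α : ℝ} {f : ℝ → ℝ}

theorem hazardRatio_le_add
    (hsr : ∀ x y, 0 ≤ x → x < y → hazardRatio f y - hazardRatio f x ≤ α * (y - x))
    {x y : ℝ} (hx : 0 ≤ x) (hxy : x ≤ y) :
    hazardRatio f y ≤ hazardRatio f x + α * (y - x) := by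
  rcases hxy.eq_or_lt with rfl | hlt
  · simp
  · linarith [hsr x y hx hlt]

theorem hazardRatio_le_of_peak (hα0 : 0 < α) (hα1 : α < 1)
    (hdiff : ∀ x, 0 ≤ x → DifferentiableAt ℝ f x) (hneg : ∀ x, 0 ≤ x → deriv f x < 0)
    (hsr : ∀ x y, 0 ≤ x → x < y → hazardRatio f y - hazardRatio f x ≤ α * (y - x))
    {x : ℝ} (hx : 0 ≤ x) (hfx : 0 < f x) (hpeak : (1 / (1 - α)) ^ (1 / α) * f x ≤ f 0) :
    hazardRatio f x ≤ x := by
  set r := hazardRatio f x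
  rcases le_or_gt (r - α * x) 0 with hsmall | hpos
  · nlinarith
  have hle : ∀ y ∈ Icc 0 x, (r - α * x + α * y) * -deriv f y ≤ f y := fun y hy =>
    (mul_le_mul_of_nonneg_right (by linarith [hazardRatio_le_add hsr hy.1 hy.2])
      (neg_nonneg.2 (hneg y hy.1).le)).trans_eq (eq_hazardRatio_mul_neg_deriv (hneg y hy.1)).symm
  have hmono := monotoneOn_mul_rpow_affine_of_mul_neg_deriv_le hα0.ne'
    (fun y hy => (hdiff y hy.1).hasDerivAt) (fun y hy => by nlinarith [hy.1]) hle
  have hends : f 0 * (r - α * x) ^ (1 / α) ≤ f x * r ^ (1 / α) := by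
    simpa using hmono (left_mem_Icc.2 hx) (right_mem_Icc.2 hx) hx
  have hrpow : ((r - α * x) / (1 - α)) ^ (1 / α) ≤ r ^ (1 / α) := by
    refine le_of_mul_le_mul_right ?_ hfx
    calc ((r - α * x) / (1 - α)) ^ (1 / α) * f x
        = (1 / (1 - α)) ^ (1 / α) * f x * (r - α * x) ^ (1 / α) := by
          rw [div_eq_mul_one_div, Real.mul_rpow hpos.le (div_nonneg zero_le_one (by linarith))]
          ring
      _ ≤ f 0 * (r - α * x) ^ (1 / α) := by gcongr
      _ ≤ r ^ (1 / α) * f x := by linarith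
  rw [Real.rpow_le_rpow_iff (by positivity) (by nlinarith) (by positivity),
    div_le_iff₀ (by linarith)] at hrpow
  nlinarith

theorem integral_le_hazardRatio_mul_sub (hα : 0 ≤ α)
    (hdiff : ∀ x, 0 ≤ x → DifferentiableAt ℝ f x) (hneg : ∀ x, 0 ≤ x → deriv f x < 0)
    (hsr : ∀ x y, 0 ≤ x → x < y → hazardRatio f y - hazardRatio f x ≤ α * (y - x))
    {x y : ℝ} (hx : 0 ≤ x) (hxy : x ≤ y) (hfy : 0 ≤ f y) :
    (1 - α) * ∫ t in x..y, f t ≤ hazardRatio f x * (f x - f y) := by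
  set r := hazardRatio f x
  have hle : ∀ t ∈ Icc x y, f t ≤ (r - α * x + α * t) * -deriv f t := fun t ht => by
    have ht0 := hx.trans ht.1
    rw [eq_hazardRatio_mul_neg_deriv (hneg t ht0)]
    exact mul_le_mul_of_nonneg_right (by linarith [hazardRatio_le_add hsr hx ht.1])
      (neg_nonneg.2 (hneg t ht0).le)
  have hanti := antitoneOn_integral_add_mul_of_le_mul_neg_deriv
    (fun t ht => (hdiff t (hx.trans ht.1)).hasDerivAt) hle
  have hends := hanti (left_mem_Icc.2 hxy) (right_mem_Icc.2 hxy) hxy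
  simp only [intervalIntegral.integral_same, mul_zero, zero_add, sub_add_cancel] at hends
  nlinarith [mul_nonneg (mul_nonneg hα (sub_nonneg.2 hxy)) hfy]

end StronglyRegular

/-- If `f` is α-strongly regular on `[0,∞)`, `0 < x₁ ≤ x₂`,
`f x₁ > 0`, and `f 0 ≥ (1/(1−α))^{1/α} · f x₁`, then
`∫_{x₁}^{x₂} f ≤ (1/(1−α))·x₁·(f x₁ − f x₂)`, and in particular
`∫_{x₁}^{x₂} f ≤ (1/(1−α))·x₁·f x₁`. -/
theorem alpha_sr_integral_bound_of_peak
    (α : ℝ) (hα0 : 0 < α) (hα1 : α < 1)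
    (f : ℝ → ℝ)
    (hf_nonneg : ∀ x, 0 ≤ x → 0 ≤ f x)
    (hf_anti : ∀ x y, 0 ≤ x → x ≤ y → f y ≤ f x)
    (hf_diff : ∀ x, 0 ≤ x → DifferentiableAt ℝ f x)
    (hf_deriv_neg : ∀ x, 0 ≤ x → deriv f x < 0)
    (hf_sr : ∀ x₁ x₂, 0 ≤ x₁ → x₁ < x₂ →
      f x₂ / |deriv f x₂| - f x₁ / |deriv f x₁| ≤ α * (x₂ - x₁))
    (x₁ x₂ : ℝ) (hx₁ : 0 < x₁) (hx₁₂ : x₁ ≤ x₂)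
    (hfx₁ : 0 < f x₁)
    (hpeak : (1 / (1 - α)) ^ (1 / α : ℝ) * f x₁ ≤ f 0) :
    (∫ x in x₁..x₂, f x) ≤ (1 / (1 - α)) * x₁ * (f x₁ - f x₂) ∧
      (∫ x in x₁..x₂, f x) ≤ (1 / (1 - α)) * x₁ * f x₁ := by
  have hfx₂ : 0 ≤ f x₂ := hf_nonneg x₂ (hx₁.le.trans hx₁₂)
  have hr : hazardRatio f x₁ ≤ x₁ :=
    hazardRatio_le_of_peak hα0 hα1 hf_diff hf_deriv_neg hf_sr hx₁.le hfx₁ hpeak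
  have hint : (1 - α) * (∫ x in x₁..x₂, f x) ≤ x₁ * (f x₁ - f x₂) :=
    (integral_le_hazardRatio_mul_sub hα0.le hf_diff hf_deriv_neg hf_sr hx₁.le hx₁₂ hfx₂).trans
      (mul_le_mul_of_nonneg_right hr (sub_nonneg.2 (hf_anti x₁ x₂ hx₁.le hx₁₂)))
  have hbound : (∫ x in x₁..x₂, f x) ≤ (1 / (1 - α)) * x₁ * (f x₁ - f x₂) := by
    rw [one_div_mul_eq_div, div_mul_eq_mul_div, le_div_iff₀ (by linarith)]
    linarith
  refine ⟨hbound, hbound.trans ?_⟩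
  exact mul_le_mul_of_nonneg_left (by linarith) (by positivity)
end

section
/- Let α ∈ (0,1), λmax > 0, and set p̃ = λmax·(1−α)^{1/α}. Let B be a finite index set; for each i ∈ B let λ_i be α-strongly regular on [0,∞) with λ_i(0) = λmax, and let x_i ≥ 0 and x*_i ≥ 0 be such that either x_i ≥ x*_i or λ_i(x_i) ≤ p̃. Then ∑_{i∈B} ∫_{x_i}^{x*_i} λ_i(x) dx ≤ (1/(1−α)) · ∑_{i∈B} λ_i(x_i)·x_i. -/
/-!
Fix a buyer, write `λ` for its demand function and put `r = λ(x)/|λ'(x)|` and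
`a(u) = r + α (u - x)`. Strong regularity says that `λ/|λ'|` lies below the line `a` on
`[x, ∞)` and above it on `[0, x]`, i.e. `λ + λ'·a` is `≤ 0` to the right of `x` and `≥ 0` to
the left.

To the right, `-λ·a/(1-α)` has derivative `≥ λ`, so `∫_x^{x*} λ ≤ λ(x)·r/(1-α)`.
To the left, `λ·a^{1/α}` is nondecreasing; comparing its values at `0` and `x` with
`λ(x) ≤ λmax (1-α)^{1/α}` gives `a(0) ≤ (1-α) r`, that is `r ≤ x`.
If instead `x* ≤ x`, the integral is nonpositive.
-/

open Set MeasureTheory intervalIntegral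

structure IsStronglyRegular (α : ℝ) (f : ℝ → ℝ) : Prop where
  nonneg : ∀ u, 0 ≤ u → 0 ≤ f u
  differentiableAt : ∀ u, 0 ≤ u → DifferentiableAt ℝ f u
  deriv_neg : ∀ u, 0 ≤ u → deriv f u < 0
  ratio_sub_le : ∀ u v, 0 ≤ u → u < v → f v / |deriv f v| - f u / |deriv f u| ≤ α * (v - u)

namespace IsStronglyRegular

variable {α : ℝ} {f : ℝ → ℝ}

lemma continuousOn_Ici (hf : IsStronglyRegular α f) : ContinuousOn f (Ici 0) :=
  fun u hu => (hf.differentiableAt u hu).continuousAt.continuousWithinAt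

lemma pos (hf : IsStronglyRegular α f) {u : ℝ} (hu : 0 ≤ u) : 0 < f u := by
  have hanti : StrictAntiOn f (Ici 0) := strictAntiOn_of_deriv_neg (convex_Ici 0)
    hf.continuousOn_Ici fun v hv => hf.deriv_neg v (interior_subset hv)
  have hlt : f (u + 1) < f u := hanti (mem_Ici.2 hu) (mem_Ici.2 (by linarith)) (by linarith)
  linarith [hf.nonneg (u + 1) (by linarith)]

lemma ratio_le_of_le (hf : IsStronglyRegular α f) {x u : ℝ} (hx : 0 ≤ x) (hxu : x ≤ u) :
    f u / -deriv f u ≤ f x / -deriv f x + α * (u - x) := by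
  rcases hxu.eq_or_lt with rfl | hlt
  · simp
  have h := hf.ratio_sub_le x u hx hlt
  rw [abs_of_neg (hf.deriv_neg u (hx.trans hlt.le)), abs_of_neg (hf.deriv_neg x hx)] at h
  linarith

lemma add_deriv_mul_nonpos (hf : IsStronglyRegular α f) {x u : ℝ} (hx : 0 ≤ x) (hxu : x ≤ u) :
    f u + deriv f u * (f x / -deriv f x + α * (u - x)) ≤ 0 := by
  have hd : 0 < -deriv f u := neg_pos.2 (hf.deriv_neg u (hx.trans hxu))
  have := (div_le_iff₀ hd).1 (hf.ratio_le_of_le hx hxu)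
  linarith

lemma add_deriv_mul_nonneg (hf : IsStronglyRegular α f) {x u : ℝ} (hu : 0 ≤ u) (hux : u ≤ x) :
    0 ≤ f u + deriv f u * (f x / -deriv f x + α * (u - x)) := by
  have hd : 0 < -deriv f u := neg_pos.2 (hf.deriv_neg u hu)
  have h := hf.ratio_le_of_le hu hux
  have := (le_div_iff₀ hd).1 (show f x / -deriv f x + α * (u - x) ≤ f u / -deriv f u by linarith)
  linarith

lemma ratio_nonneg (hf : IsStronglyRegular α f) {x : ℝ} (hx : 0 ≤ x) : 0 ≤ f x / -deriv f x :=
  div_nonneg (hf.nonneg x hx) (neg_nonneg.2 (hf.deriv_neg x hx).le)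

lemma integral_le_ratio_mul (hf : IsStronglyRegular α f) (hα0 : 0 ≤ α) (hα1 : α < 1)
    {x y : ℝ} (hx : 0 ≤ x) (hxy : x ≤ y) :
    ∫ u in x..y, f u ≤ f x / -deriv f x * f x / (1 - α) := by
  set r := f x / -deriv f x
  have h1α : 0 < 1 - α := by linarith
  set G : ℝ → ℝ := fun u => -(f u * (r + α * (u - x))) / (1 - α)
  have hG : ∀ u, 0 ≤ u →
      HasDerivAt G (-(deriv f u * (r + α * (u - x)) + f u * α) / (1 - α)) u := by
    intro u hu
    have hline : HasDerivAt (fun u => r + α * (u - x)) α u := by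
      simpa using ((hasDerivAt_id u).sub_const x).const_mul α |>.const_add r
    exact (((hf.differentiableAt u hu).hasDerivAt.mul hline).neg).div_const _
  calc ∫ u in x..y, f u ≤ G y - G x := by
        refine integral_le_sub_of_hasDeriv_right_of_le hxy
          (fun u hu => (hG u (hx.trans hu.1)).continuousAt.continuousWithinAt)
          (fun u hu => (hG u (hx.trans hu.1.le)).hasDerivWithinAt)
          ((hf.continuousOn_Ici.mono fun u hu => hx.trans hu.1).integrableOn_Icc)
          fun u hu => ?_
        have : f u + deriv f u * (r + α * (u - x)) ≤ 0 := hf.add_deriv_mul_nonpos hx hu.1.le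
        rw [le_div_iff₀ h1α]
        linarith
    _ = (r * f x - f y * (r + α * (y - x))) / (1 - α) := by simp only [G]; ring
    _ ≤ r * f x / (1 - α) := by
        gcongr
        have : 0 ≤ f y * (r + α * (y - x)) := mul_nonneg (hf.nonneg y (hx.trans hxy))
          (add_nonneg (hf.ratio_nonneg hx) (mul_nonneg hα0 (sub_nonneg.2 hxy)))
        linarith

lemma ratio_le_self (hf : IsStronglyRegular α f) (hα0 : 0 < α) (hα1 : α < 1) {x : ℝ}
    (hx : 0 ≤ x) (hfx : f x ≤ f 0 * (1 - α) ^ (1 / α)) : f x / -deriv f x ≤ x := by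
  set r := f x / -deriv f x
  rcases le_or_gt (r - α * x) 0 with hc | hc
  · nlinarith
  have h1α : 0 < 1 - α := by linarith
  have ha : ∀ u ∈ Icc 0 x, 0 < r + α * (u - x) := fun u hu => by nlinarith [hu.1]
  set L : ℝ → ℝ := fun u => Real.log (f u) + 1 / α * Real.log (r + α * (u - x))
  have hL : ∀ u ∈ Icc 0 x,
      HasDerivAt L (deriv f u / f u + 1 / α * (α / (r + α * (u - x)))) u := by
    intro u hu
    have hline : HasDerivAt (fun u => r + α * (u - x)) α u := by
      simpa using ((hasDerivAt_id u).sub_const x).const_mul α |>.const_add r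
    exact ((hf.differentiableAt u hu.1).hasDerivAt.log (hf.pos hu.1).ne').add
      ((hline.log (ha u hu).ne').const_mul _)
  have hmono : MonotoneOn L (Icc 0 x) := by
    refine monotoneOn_of_hasDerivWithinAt_nonneg (convex_Icc 0 x)
      (fun u hu => (hL u hu).continuousAt.continuousWithinAt)
      (fun u hu => (hL u (interior_subset hu)).hasDerivWithinAt) fun u hu => ?_
    have hu := interior_subset hu
    have hau := ha u hu
    have hfu := hf.pos hu.1
    have key : deriv f u / f u + 1 / α * (α / (r + α * (u - x))) =
        (f u + deriv f u * (r + α * (u - x))) / (f u * (r + α * (u - x))) := by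
      field_simp
      ring
    rw [key]
    exact div_nonneg (hf.add_deriv_mul_nonneg hu.1 hu.2) (by positivity)
  have hL0x : L 0 ≤ L x := hmono ⟨le_rfl, hx⟩ ⟨hx, le_rfl⟩ hx
  have hlog : Real.log (f x) ≤ Real.log (f 0) + 1 / α * Real.log (1 - α) := by
    rw [← Real.log_rpow h1α, ← Real.log_mul (hf.pos le_rfl).ne' (by positivity)]
    exact Real.log_le_log (hf.pos hx) hfx
  have hr : 0 < r := by nlinarith
  have hlog' : Real.log (r - α * x) ≤ Real.log ((1 - α) * r) := by
    rw [Real.log_mul h1α.ne' hr.ne']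
    simp only [L, sub_self, mul_zero, add_zero, zero_sub, mul_neg, ← sub_eq_add_neg] at hL0x
    have := le_of_mul_le_mul_left (by linarith : 1 / α * Real.log (r - α * x) ≤
      1 / α * (Real.log (1 - α) + Real.log r)) (by positivity)
    linarith
  nlinarith [(Real.log_le_log_iff hc (by positivity)).1 hlog']

theorem integral_le_div_one_sub_mul (hf : IsStronglyRegular α f) (hα0 : 0 < α) (hα1 : α < 1)
    {x y : ℝ} (hx : 0 ≤ x) (hy : 0 ≤ y) (h : y ≤ x ∨ f x ≤ f 0 * (1 - α) ^ (1 / α)) :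
    ∫ u in x..y, f u ≤ 1 / (1 - α) * (f x * x) := by
  have h1α : 0 < 1 - α := by linarith
  rcases le_or_gt y x with hyx | hxy
  · have : 0 ≤ ∫ u in y..x, f u := integral_nonneg hyx fun u hu => hf.nonneg u (hy.trans hu.1)
    rw [integral_symm]
    have : 0 ≤ 1 / (1 - α) * (f x * x) := by positivity [hf.nonneg x hx]
    linarith
  have hrx := hf.ratio_le_self hα0 hα1 hx (h.resolve_left hxy.not_ge)
  calc ∫ u in x..y, f u ≤ f x / -deriv f x * f x / (1 - α) :=
        hf.integral_le_ratio_mul hα0.le hα1 hx hxy.le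
    _ ≤ x * f x / (1 - α) := by gcongr; exact hf.nonneg x hx
    _ = 1 / (1 - α) * (f x * x) := by ring

end IsStronglyRegular

theorem welfare_gap_le_income_general
    {ι : Type*} (B : Finset ι)
    (α lamMax : ℝ) (hα0 : 0 < α) (hα1 : α < 1)
    (lam : ι → ℝ → ℝ) (x xstar : ι → ℝ)
    (hlam_nonneg : ∀ i ∈ B, ∀ u, 0 ≤ u → 0 ≤ lam i u)
    (hlam_diff : ∀ i ∈ B, ∀ u, 0 ≤ u → DifferentiableAt ℝ (lam i) u)
    (hlam_deriv_neg : ∀ i ∈ B, ∀ u, 0 ≤ u → deriv (lam i) u < 0)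
    (hlam_sr : ∀ i ∈ B, ∀ u v, 0 ≤ u → u < v →
      lam i v / |deriv (lam i) v| - lam i u / |deriv (lam i) u| ≤ α * (v - u))
    (hpeak : ∀ i ∈ B, lam i 0 = lamMax)
    (hx : ∀ i ∈ B, 0 ≤ x i) (hxstar : ∀ i ∈ B, 0 ≤ xstar i)
    (hbench : ∀ i ∈ B, xstar i ≤ x i ∨
      lam i (x i) ≤ lamMax * (1 - α) ^ (1 / α : ℝ)) :
    ∑ i ∈ B, ∫ u in (x i)..(xstar i), lam i u ≤
      (1 / (1 - α)) * ∑ i ∈ B, lam i (x i) * x i := by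
  rw [Finset.mul_sum]
  refine Finset.sum_le_sum fun i hi => ?_
  have hsr : IsStronglyRegular α (lam i) :=
    ⟨hlam_nonneg i hi, hlam_diff i hi, hlam_deriv_neg i hi, hlam_sr i hi⟩
  exact hsr.integral_le_div_one_sub_mul hα0 hα1 (hx i hi) (hxstar i hi)
    (by rw [hpeak i hi]; exact hbench i hi)

/-- Claim `clm_aboveandbelowthresh`, part 2. If each `λ_i` is
α-strongly regular with uniform peak `λ_i(0) = λmax`, and each demand `x_i` either
dominates the optimum demand `x*_i` or satisfies `λ_i(x_i) ≤ p̃ = λmax·(1−α)^{1/α}`,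
then `∑_i ∫_{x_i}^{x*_i} λ_i ≤ (1/(1−α))·∑_i λ_i(x_i)·x_i`. -/
theorem welfare_gap_le_income
    {ι : Type*} (B : Finset ι)
    (α lamMax : ℝ) (hα0 : 0 < α) (hα1 : α < 1) (hlamMax : 0 < lamMax)
    (lam : ι → ℝ → ℝ) (x xstar : ι → ℝ)
    (hlam_nonneg : ∀ i ∈ B, ∀ u, 0 ≤ u → 0 ≤ lam i u)
    (hlam_anti : ∀ i ∈ B, ∀ u v, 0 ≤ u → u ≤ v → lam i v ≤ lam i u)
    (hlam_diff : ∀ i ∈ B, ∀ u, 0 ≤ u → DifferentiableAt ℝ (lam i) u)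
    (hlam_deriv_neg : ∀ i ∈ B, ∀ u, 0 ≤ u → deriv (lam i) u < 0)
    (hlam_sr : ∀ i ∈ B, ∀ u v, 0 ≤ u → u < v →
      lam i v / |deriv (lam i) v| - lam i u / |deriv (lam i) u| ≤ α * (v - u))
    (hpeak : ∀ i ∈ B, lam i 0 = lamMax)
    (hx : ∀ i ∈ B, 0 ≤ x i) (hxstar : ∀ i ∈ B, 0 ≤ xstar i)
    (hbench : ∀ i ∈ B, xstar i ≤ x i ∨
      lam i (x i) ≤ lamMax * (1 - α) ^ (1 / α : ℝ)) :
    ∑ i ∈ B, ∫ u in (x i)..(xstar i), lam i u ≤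
      (1 / (1 - α)) * ∑ i ∈ B, lam i (x i) * x i :=
  welfare_gap_le_income_general B α lamMax hα0 hα1 lam x xstar hlam_nonneg hlam_diff hlam_deriv_neg
    hlam_sr hpeak hx hxstar hbench
end
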